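/- If W = W0 + W⃗ is a C² solution of the main Vekua equation DW = (Df/f) conj(W) on Ω ⊆ ℝ³ with f a nonvanishing real C² function, then the scalar part satisfies the conductivity equation ∇ · (f² ∇(W0/f)) = 0, and the vector part satisfies the double curl-type equation curl(f^{-2} curl(f W⃗)) = 0. -/

import Mathlib

noncomputable section

/-- ℝ³ as the function space `Fin 3 → ℝ`. -/
abbrev V3 : Type := Fin 3 → ℝ

/-- The quaternion units e₁, e₂, e₃. -/
def qe (i : Fin 3) : Quaternion ℝ :=
  ⟨0, if i = 0 then 1 else 0, if i = 1 then 1 else 0, if i = 2 then 1 else 0⟩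

/-- Embedding of a vector of ℝ³ as a purely vectorial quaternion. -/
def vecQ (v : V3) : Quaternion ℝ := ⟨0, v 0, v 1, v 2⟩

/-- Partial derivative of a quaternion-valued function. -/
def pd (i : Fin 3) (w : V3 → Quaternion ℝ) (x : V3) : Quaternion ℝ :=
  fderiv ℝ w x (Pi.single i 1)

/-- The Moisil–Teodorescu (Dirac) operator D = Σ eᵢ ∂/∂xᵢ. -/
def Dop (w : V3 → Quaternion ℝ) (x : V3) : Quaternion ℝ :=
  ∑ i : Fin 3, qe i * pd i w x

/-- Partial derivative of a real-valued function. -/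
def pdR (i : Fin 3) (u : V3 → ℝ) (x : V3) : ℝ :=
  fderiv ℝ u x (Pi.single i 1)

/-- Gradient of a scalar function. -/
def gradR (u : V3 → ℝ) (x : V3) : V3 := fun i => pdR i u x

/-- Divergence of a vector field. -/
def divg (v : V3 → V3) (x : V3) : ℝ := ∑ i : Fin 3, pdR i (fun y => v y i) x

/-- Curl of a vector field. -/
def curl (v : V3 → V3) (x : V3) : V3 :=
  ![pdR 1 (fun y => v y 2) x - pdR 2 (fun y => v y 1) x,
    pdR 2 (fun y => v y 0) x - pdR 0 (fun y => v y 2) x,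
    pdR 0 (fun y => v y 1) x - pdR 1 (fun y => v y 0) x]

/-!
The vector part of the Vekua equation `DW = (Df/f) W̄` reads
`∇W0 + curl W⃗ = f⁻¹ (W0 ∇f − ∇f × W⃗)`; multiplied by `f` and combined with the product rule
`curl (f W⃗) = f curl W⃗ + ∇f × W⃗` this is `curl (f W⃗) = −f² ∇(W0/f)`. Taking the divergence of
this identity gives the conductivity equation (div curl = 0); dividing it by `f²` and taking the
curl gives the double curl equation (curl grad = 0).
-/

open Filter Topology Matrix

section VectorCalculus

variable {u v : V3 → ℝ} {w w' : V3 → V3} {x : V3}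

lemma pdR_congr (h : u =ᶠ[𝓝 x] v) (i : Fin 3) : pdR i u x = pdR i v x := by
  rw [pdR, pdR, h.fderiv_eq]

lemma pdR_neg (i : Fin 3) : pdR i (fun y => -u y) x = -pdR i u x := by
  simp [pdR, fderiv_fun_neg]

lemma pdR_sub (hu : DifferentiableAt ℝ u x) (hv : DifferentiableAt ℝ v x) (i : Fin 3) :
    pdR i (fun y => u y - v y) x = pdR i u x - pdR i v x := by
  simp [pdR, fderiv_fun_sub hu hv]

lemma pdR_mul (hu : DifferentiableAt ℝ u x) (hv : DifferentiableAt ℝ v x) (i : Fin 3) :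
    pdR i (fun y => u y * v y) x = pdR i u x * v x + u x * pdR i v x := by
  simp only [pdR, fderiv_fun_mul hu hv, _root_.add_apply, _root_.smul_apply, smul_eq_mul]
  ring

lemma pdR_inv (hv : DifferentiableAt ℝ v x) (hx : v x ≠ 0) (i : Fin 3) :
    pdR i (fun y => (v y)⁻¹) x = -pdR i v x / v x ^ 2 := by
  rw [pdR, show (fun y => (v y)⁻¹) = (·⁻¹) ∘ v from rfl,
    ((hasFDerivAt_inv hx).comp x hv.hasFDerivAt).fderiv]
  simp only [pdR, ContinuousLinearMap.comp_apply, ContinuousLinearMap.toSpanSingleton_apply,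
    smul_eq_mul]
  ring

lemma pdR_div (hu : DifferentiableAt ℝ u x) (hv : DifferentiableAt ℝ v x) (hx : v x ≠ 0)
    (i : Fin 3) :
    pdR i (fun y => u y / v y) x = (v x * pdR i u x - u x * pdR i v x) / v x ^ 2 := by
  simp only [div_eq_mul_inv]
  rw [pdR_mul (v := fun y => (v y)⁻¹) hu (hv.inv hx), pdR_inv hv hx]
  field_simp
  ring

lemma differentiableAt_pdR (hu : ContDiffAt ℝ 2 u x) (i : Fin 3) :
    DifferentiableAt ℝ (pdR i u) x :=
  ((hu.fderiv_right (m := 1) (by norm_num)).differentiableAt one_ne_zero).clm_apply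
    (differentiableAt_const _)

lemma pdR_comm (hu : ContDiffAt ℝ 2 u x) (i j : Fin 3) :
    pdR i (pdR j u) x = pdR j (pdR i u) x := by
  have hdiff : DifferentiableAt ℝ (fderiv ℝ u) x :=
    (hu.fderiv_right (m := 1) (by norm_num)).differentiableAt one_ne_zero
  have hsymm := hu.isSymmSndFDerivAt (by simp [minSmoothness_of_isRCLikeNormedField])
  unfold pdR
  rw [fderiv_clm_apply hdiff (differentiableAt_const _), fderiv_clm_apply hdiff
    (differentiableAt_const _)]
  simpa using hsymm (Pi.single i 1) (Pi.single j 1)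

lemma pdR_apply_congr (h : w =ᶠ[𝓝 x] w') (i k : Fin 3) :
    pdR i (fun y => w y k) x = pdR i (fun y => w' y k) x :=
  pdR_congr (h.fun_comp (· k)) i

lemma divg_congr (h : w =ᶠ[𝓝 x] w') : divg w x = divg w' x := by
  simp only [divg, pdR_apply_congr h]

lemma curl_congr (h : w =ᶠ[𝓝 x] w') : curl w x = curl w' x := by
  simp only [curl, pdR_apply_congr h]

lemma divg_neg : divg (fun y => -w y) x = -divg w x := by
  simp only [divg, Pi.neg_apply, pdR_neg, Finset.sum_neg_distrib]

lemma curl_neg : curl (fun y => -w y) x = -curl w x := by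
  ext k
  fin_cases k <;> simp [curl, pdR_neg] <;> ring

lemma divg_curl (hw : ContDiffAt ℝ 2 w x) : divg (curl w) x = 0 := by
  have hc := contDiffAt_pi.1 hw
  have hd := fun i k => differentiableAt_pdR (hc k) i
  simp [divg, curl, Fin.sum_univ_three, pdR_sub (hd _ _) (hd _ _), pdR_comm (hc _)]

lemma curl_gradR (hu : ContDiffAt ℝ 2 u x) : curl (gradR u) x = 0 := by
  ext k
  fin_cases k <;> simp [curl, gradR, pdR_comm hu]

lemma curl_smul (hu : DifferentiableAt ℝ u x) (hw : DifferentiableAt ℝ w x) :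
    curl (fun y => u y • w y) x = u x • curl w x + gradR u x ⨯₃ w x := by
  have hc := differentiableAt_pi.1 hw
  ext k
  fin_cases k <;> simp [curl, gradR, cross_apply, pdR_mul hu (hc _)] <;> ring

lemma gradR_div (hu : DifferentiableAt ℝ u x) (hv : DifferentiableAt ℝ v x) (hx : v x ≠ 0) :
    gradR (fun y => u y / v y) x = (v x ^ 2)⁻¹ • (v x • gradR u x - u x • gradR v x) := by
  ext k
  simp only [gradR, pdR_div hu hv hx, Pi.smul_apply, Pi.sub_apply, smul_eq_mul]
  ring

end VectorCalculus

section Quaternion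

@[simp] lemma vecQ_re (a : V3) : (vecQ a).re = 0 := rfl
@[simp] lemma vecQ_imI (a : V3) : (vecQ a).imI = a 0 := rfl
@[simp] lemma vecQ_imJ (a : V3) : (vecQ a).imJ = a 1 := rfl
@[simp] lemma vecQ_imK (a : V3) : (vecQ a).imK = a 2 := rfl

@[simp] lemma qe_re (i : Fin 3) : (qe i).re = 0 := rfl
@[simp] lemma qe_imI (i : Fin 3) : (qe i).imI = if i = 0 then 1 else 0 := rfl
@[simp] lemma qe_imJ (i : Fin 3) : (qe i).imJ = if i = 1 then 1 else 0 := rfl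
@[simp] lemma qe_imK (i : Fin 3) : (qe i).imK = if i = 2 then 1 else 0 := rfl

def vecQL : V3 →L[ℝ] Quaternion ℝ :=
  LinearMap.toContinuousLinearMap
    { toFun := vecQ
      map_add' := fun a b => by ext <;> simp
      map_smul' := fun c a => by ext <;> simp }

@[simp] lemma vecQL_apply (a : V3) : vecQL a = vecQ a := rfl

lemma coe_add_vecQ_inj {r s : ℝ} {a b : V3} :
    (r : Quaternion ℝ) + vecQ a = s + vecQ b ↔ r = s ∧ a = b := by
  constructor
  · intro h
    have := Quaternion.ext_iff.1 h
    simp only [Quaternion.re_add, Quaternion.imI_add, Quaternion.imJ_add, Quaternion.imK_add,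
      Quaternion.re_coe, Quaternion.imI_coe, Quaternion.imJ_coe, Quaternion.imK_coe, vecQ_re,
      vecQ_imI, vecQ_imJ, vecQ_imK, add_zero, zero_add] at this
    obtain ⟨hre, h0, h1, h2⟩ := this
    refine ⟨hre, ?_⟩
    ext k
    fin_cases k <;> assumption
  · rintro ⟨rfl, rfl⟩
    rfl

lemma smul_coe_add_vecQ (t r : ℝ) (a : V3) :
    t • ((r : Quaternion ℝ) + vecQ a) = ↑(t * r) + vecQ (t • a) := by
  ext <;> simp

lemma vecQ_mul_star_coe_add_vecQ (a b : V3) (c : ℝ) :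
    vecQ a * star ((c : Quaternion ℝ) + vecQ b) = ↑(a ⬝ᵥ b) + vecQ (c • a - a ⨯₃ b) := by
  ext <;> simp [cross_apply, dotProduct, Fin.sum_univ_three, vecHead, vecTail] <;> ring

variable {u : V3 → ℝ} {w : V3 → V3} {x : V3}

lemma pd_coe_add_vecQ (hu : DifferentiableAt ℝ u x) (hw : DifferentiableAt ℝ w x) (i : Fin 3) :
    pd i (fun y => (u y : Quaternion ℝ) + vecQ (w y)) x =
      ↑(pdR i u x) + vecQ (fun k => pdR i (fun y => w y k) x) := by
  have hderiv := ((algebraMapCLM ℝ (Quaternion ℝ)).hasFDerivAt.comp x hu.hasFDerivAt).add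
    (vecQL.hasFDerivAt.comp x hw.hasFDerivAt)
  rw [pd, show (fun y => (u y : Quaternion ℝ) + vecQ (w y)) =
    (algebraMapCLM ℝ (Quaternion ℝ)) ∘ u + vecQL ∘ w from rfl, hderiv.fderiv]
  simp [pdR, fderiv_apply hw]

lemma Dop_coe_add_vecQ (hu : DifferentiableAt ℝ u x) (hw : DifferentiableAt ℝ w x) :
    Dop (fun y => (u y : Quaternion ℝ) + vecQ (w y)) x =
      ↑(-divg w x) + vecQ (gradR u x + curl w x) := by
  simp only [Dop, pd_coe_add_vecQ hu hw, Fin.sum_univ_three]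
  ext <;> simp [divg, gradR, curl, Fin.sum_univ_three, vecHead, vecTail] <;> ring

end Quaternion

lemma curl_smul_eq_neg_sq_smul_gradR_div_of_vekua {f W0 : V3 → ℝ} {Wv : V3 → V3} {x : V3}
    (hf : DifferentiableAt ℝ f x) (hfx : f x ≠ 0) (hW0 : DifferentiableAt ℝ W0 x)
    (hWv : DifferentiableAt ℝ Wv x)
    (hVekua : Dop (fun y => ((W0 y : ℝ) : Quaternion ℝ) + vecQ (Wv y)) x =
        (f x)⁻¹ • (vecQ (gradR f x) * star (((W0 x : ℝ) : Quaternion ℝ) + vecQ (Wv x)))) :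
    curl (fun y => f y • Wv y) x = -(f x ^ 2 • gradR (fun y => W0 y / f y) x) := by
  rw [Dop_coe_add_vecQ hW0 hWv, vecQ_mul_star_coe_add_vecQ, smul_coe_add_vecQ,
    coe_add_vecQ_inj] at hVekua
  rw [curl_smul hf hWv, gradR_div hW0 hf hfx]
  ext k
  have hk := congrFun hVekua.2 k
  simp only [Pi.add_apply, Pi.smul_apply, Pi.sub_apply, Pi.neg_apply, smul_eq_mul] at hk ⊢
  field_simp at hk ⊢
  linear_combination hk

/-- If W = W0 + W⃗ is a C² solution of the main Vekua equation
    DW = (Df/f) conj(W) on Ω with f a nonvanishing real C² function, then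
    ∇·(f²∇(W0/f)) = 0 (conductivity equation) and curl(f⁻² curl(f W⃗)) = 0
    (double curl-type equation) on Ω. -/
theorem stmt9 (Ω : Set V3) (hΩ : IsOpen Ω) (f W0 : V3 → ℝ) (Wv : V3 → V3)
    (hf : ContDiffOn ℝ 2 f Ω) (hfne : ∀ x ∈ Ω, f x ≠ 0)
    (hW0 : ContDiffOn ℝ 2 W0 Ω) (hWv : ContDiffOn ℝ 2 Wv Ω)
    (hVekua : ∀ x ∈ Ω, Dop (fun y => ((W0 y : ℝ) : Quaternion ℝ) + vecQ (Wv y)) x =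
        (f x)⁻¹ • (vecQ (gradR f x) * star (((W0 x : ℝ) : Quaternion ℝ) + vecQ (Wv x)))) :
    ∀ x ∈ Ω,
      divg (fun y => f y ^ 2 • gradR (fun z => W0 z / f z) y) x = 0 ∧
      curl (fun y => (f y ^ 2)⁻¹ • curl (fun z => f z • Wv z) y) x = 0 := by
  have hcurl : ∀ y ∈ Ω,
      curl (fun z => f z • Wv z) y = -(f y ^ 2 • gradR (fun z => W0 z / f z) y) := by
    intro y hy
    have hΩy := hΩ.mem_nhds hy
    exact curl_smul_eq_neg_sq_smul_gradR_div_of_vekua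
      ((hf.contDiffAt hΩy).differentiableAt two_ne_zero) (hfne y hy)
      ((hW0.contDiffAt hΩy).differentiableAt two_ne_zero)
      ((hWv.contDiffAt hΩy).differentiableAt two_ne_zero) (hVekua y hy)
  intro x hx
  have hΩx := hΩ.mem_nhds hx
  constructor
  · have hflux : (fun y => f y ^ 2 • gradR (fun z => W0 z / f z) y) =ᶠ[𝓝 x]
        fun y => -curl (fun z => f z • Wv z) y := by
      filter_upwards [hΩx] with y hy
      rw [hcurl y hy, neg_neg]
    rw [divg_congr hflux, divg_neg,
      divg_curl ((hf.contDiffAt hΩx).fun_smul (hWv.contDiffAt hΩx)), neg_zero]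
  · have hgrad : (fun y => (f y ^ 2)⁻¹ • curl (fun z => f z • Wv z) y) =ᶠ[𝓝 x]
        fun y => -gradR (fun z => W0 z / f z) y := by
      filter_upwards [hΩx] with y hy
      rw [hcurl y hy, smul_neg, inv_smul_smul₀ (pow_ne_zero 2 (hfne y hy))]
    rw [curl_congr hgrad, curl_neg,
      curl_gradR ((hW0.contDiffAt hΩx).fun_div (hf.contDiffAt hΩx) (hfne x hx)), neg_zero]
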